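/- Let m be a nonzero integer, let k ≥ 2 be even, and let γ = -T^m ∈ SL(2,ℤ). Then the torsion submodule of Q_k(γ) = coker(1 - γ^k) = coker(1 - T^{mk}) has cardinality |m|·k, the automorphism g_γ induced by γ acts on it by negation, and the number of orbits is c_k(-T^m) = |m|·k/2 + 1. -/
import Mathlib

/-- `Q_k(γ) = coker(1 - γ^k)`, the cokernel of `1 - γ^k` acting on `Fin 2 → ℤ`. -/
abbrev Qk (γ : Matrix.SpecialLinearGroup (Fin 2) ℤ) (k : ℕ) :=
  (Fin 2 → ℤ) ⧸ LinearMap.range (Matrix.toLin'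
    (1 - ((γ ^ k : Matrix.SpecialLinearGroup (Fin 2) ℤ) : Matrix (Fin 2) (Fin 2) ℤ)))

/-- The shear matrix `T = [[1,1],[0,1]]` as an element of `SL(2,ℤ)`. -/
def T : Matrix.SpecialLinearGroup (Fin 2) ℤ :=
  ⟨!![1, 1; 0, 1], by norm_num [Matrix.det_fin_two_of]⟩

/-- Counting orbits of negation on `ZMod n` for even `n ≥ 2`. -/
lemma card_quot_neg (n : ℕ) (hn : 2 ≤ n) (hne : Even n) :
    Nat.card (Quot fun a b : ZMod n => a = b ∨ a = -b) = n / 2 + 1 := by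
  haveI : NeZero n := ⟨by omega⟩
  obtain ⟨t, ht⟩ := hne
  have ht2 : n / 2 = t := by omega
  set s : ZMod n → ZMod n → Prop := fun a b => a = b ∨ a = -b with hs
  have hs_equiv : Equivalence s := by
    constructor
    · intro a; exact Or.inl rfl
    · intro a b h; rcases h with h | h
      · exact Or.inl h.symm
      · exact Or.inr (by rw [h, neg_neg])
    · intro a b c h1 h2
      rcases h1 with h1 | h1 <;> rcases h2 with h2 | h2
      · exact Or.inl (h1.trans h2)
      · exact Or.inr (h1.trans h2)
      · exact Or.inr (by rw [h1, h2])
      · exact Or.inl (by rw [h1, h2, neg_neg])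
  have key : ∀ a b : ZMod n, Quot.mk s a = Quot.mk s b ↔ s a b := by
    intro a b
    constructor
    · intro h; exact (hs_equiv.eqvGen_iff).mp (Quot.eqvGen_exact h)
    · intro h; exact Quot.sound h
  have hbij : Function.Bijective (fun i : Fin (n/2+1) => Quot.mk s ((i : ℕ) : ZMod n)) := by
    constructor
    · intro i j hij
      have h := (key _ _).mp hij
      have hi : (i : ℕ) < n := by omega
      have hj : (j : ℕ) < n := by omega
      rcases h with h | h
      · have := congrArg ZMod.val h
        rw [ZMod.val_cast_of_lt hi, ZMod.val_cast_of_lt hj] at this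
        exact Fin.ext this
      · have : (((i : ℕ) + (j : ℕ) : ℕ) : ZMod n) = 0 := by
          push_cast
          rw [h]; ring
        have hdvd : n ∣ (i : ℕ) + (j : ℕ) := (ZMod.natCast_eq_zero_iff _ _).mp this
        have hle : (i : ℕ) + (j : ℕ) ≤ n := by omega
        have : (i : ℕ) + (j : ℕ) = 0 ∨ (i : ℕ) + (j : ℕ) = n := by
          rcases Nat.eq_zero_or_pos ((i : ℕ) + (j : ℕ)) with h0 | h0
          · exact Or.inl h0
          · exact Or.inr (le_antisymm hle (Nat.le_of_dvd h0 hdvd))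
        have : (i : ℕ) = (j : ℕ) := by omega
        exact Fin.ext this
    · intro q
      obtain ⟨a, rfl⟩ := Quot.exists_rep q
      by_cases hv : a.val ≤ n / 2
      · refine ⟨⟨a.val, by omega⟩, ?_⟩
        simp only []
        congr 1
        exact ZMod.natCast_zmod_val a
      · have hvn : a.val < n := ZMod.val_lt a
        refine ⟨⟨n - a.val, by omega⟩, ?_⟩
        simp only []
        have h1 : ((n - a.val : ℕ) : ZMod n) = -a := by
          have : ((n - a.val : ℕ) : ZMod n) = (n : ZMod n) - (a.val : ZMod n) :=
            Nat.cast_sub (le_of_lt hvn)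
          rw [this, ZMod.natCast_self, ZMod.natCast_zmod_val, zero_sub]
        rw [h1]
        exact Quot.sound (Or.inr rfl)
  calc Nat.card (Quot s) = Nat.card (Fin (n/2+1)) := (Nat.card_eq_of_bijective _ hbij).symm
    _ = n / 2 + 1 := by simp

/-- for `γ = -T^m` with `m ≠ 0` and `k ≥ 2` even, the torsion submodule of
`Q_k(γ)` has cardinality `|m|·k`, the induced endomorphism `g` acts on it by negation,
and the number of orbits is `c_k(-T^m) = |m|·k/2 + 1`. -/
theorem stmt10 (m : ℤ) (hm : m ≠ 0) (k : ℕ) (hk : 2 ≤ k) (hke : Even k)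
    (g : Module.End ℤ (Qk (-(T ^ m)) k))
    (hg : ∀ v : Fin 2 → ℤ, g (Submodule.Quotient.mk v) =
      Submodule.Quotient.mk (Matrix.mulVec
        (((-(T ^ m) : Matrix.SpecialLinearGroup (Fin 2) ℤ)) : Matrix (Fin 2) (Fin 2) ℤ) v)) :
    Nat.card (Submodule.torsion ℤ (Qk (-(T ^ m)) k)) = m.natAbs * k ∧
    (∀ x ∈ Submodule.torsion ℤ (Qk (-(T ^ m)) k), g x = -x) ∧
    Nat.card (Quot fun x y : Submodule.torsion ℤ (Qk (-(T ^ m)) k) =>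
        ∃ j : ℕ, (g ^ j) (x : Qk (-(T ^ m)) k) = (y : Qk (-(T ^ m)) k)) =
      m.natAbs * (k / 2) + 1 := by
  set c : ℤ := m * k with hc
  have hkne : (k : ℤ) ≠ 0 := by exact_mod_cast (by omega : k ≠ 0)
  have hcne : c ≠ 0 := mul_ne_zero hm hkne
  set n : ℕ := m.natAbs * k with hn
  have hnc : c.natAbs = n := by
    simp [hc, hn, Int.natAbs_mul]
  have hm1 : 1 ≤ m.natAbs := Int.natAbs_pos.mpr hm
  have hn2 : 2 ≤ n := le_trans hk (Nat.le_mul_of_pos_left k hm1)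
  haveI : NeZero n := ⟨by omega⟩
  -- the matrix picture
  have hcoe : (((-(T ^ m)) ^ k : Matrix.SpecialLinearGroup (Fin 2) ℤ) : Matrix (Fin 2) (Fin 2) ℤ)
      = !![1, c; 0, 1] := by
    have h1 : (-(T ^ m)) ^ k = T ^ c := by
      rw [hke.neg_pow, ← zpow_natCast (T ^ m) k, ← zpow_mul]
    rw [h1]
    exact ModularGroup.coe_T_zpow c
  have hmat : (1 - (((-(T ^ m)) ^ k : Matrix.SpecialLinearGroup (Fin 2) ℤ) : Matrix (Fin 2) (Fin 2) ℤ))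
      = !![0, -c; 0, 0] := by
    rw [hcoe, Matrix.one_fin_two]
    ext i j
    fin_cases i <;> fin_cases j <;> simp
  have hrange : ∀ w : Fin 2 → ℤ,
      w ∈ LinearMap.range (Matrix.toLin'
        (1 - (((-(T ^ m)) ^ k : Matrix.SpecialLinearGroup (Fin 2) ℤ) : Matrix (Fin 2) (Fin 2) ℤ))) ↔
      c ∣ w 0 ∧ w 1 = 0 := by
    intro w
    constructor
    · rintro ⟨v, hv⟩
      rw [Matrix.toLin'_apply, hmat] at hv
      have h0 : w 0 = -c * v 1 := by
        rw [← hv]; simp [Matrix.mulVec, dotProduct, Fin.sum_univ_two]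
      have h1 : w 1 = 0 := by
        rw [← hv]; simp [Matrix.mulVec, dotProduct, Fin.sum_univ_two]
      exact ⟨⟨-(v 1), by rw [h0]; ring⟩, h1⟩
    · rintro ⟨⟨t, ht⟩, h1⟩
      refine ⟨![0, -t], ?_⟩
      rw [Matrix.toLin'_apply, hmat]
      funext i
      fin_cases i <;>
        simp [Matrix.mulVec, dotProduct, Fin.sum_univ_two, ht, h1]
  -- torsion characterization
  have htor : ∀ x : Qk (-(T ^ m)) k, x ∈ Submodule.torsion ℤ (Qk (-(T ^ m)) k) ↔
      ∃ a : ℤ, x = Submodule.Quotient.mk ![a, 0] := by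
    intro x
    constructor
    · intro hx
      obtain ⟨v, rfl⟩ := Submodule.Quotient.mk_surjective _ x
      obtain ⟨r, hr⟩ := hx
      rw [← Submodule.Quotient.mk_smul, Submodule.Quotient.mk_eq_zero] at hr
      have h1 : v 1 = 0 := by
        have h2 := ((hrange _).mp hr).2
        simp only [Pi.smul_apply, smul_eq_mul] at h2
        have hrne : (r : ℤ) ≠ 0 := nonZeroDivisors.coe_ne_zero r
        exact (mul_eq_zero.mp h2).resolve_left hrne
      refine ⟨v 0, ?_⟩
      congr 1
      funext i
      fin_cases i <;> simp [h1]
    · rintro ⟨a, rfl⟩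
      refine ⟨⟨c, mem_nonZeroDivisors_of_ne_zero hcne⟩, ?_⟩
      rw [← Submodule.Quotient.mk_smul, Submodule.Quotient.mk_eq_zero]
      refine (hrange _).mpr ⟨⟨a, ?_⟩, ?_⟩ <;> simp
  -- quotient equality criterion
  have hmk : ∀ a b : ℤ, (Submodule.Quotient.mk ![a, 0] : Qk (-(T ^ m)) k)
      = Submodule.Quotient.mk ![b, 0] ↔ c ∣ a - b := by
    intro a b
    rw [Submodule.Quotient.eq, hrange]
    constructor
    · intro h; simpa using h.1
    · intro h; exact ⟨by simpa using h, by simp⟩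
  have hdvd_iff : ∀ a b : ℤ, c ∣ a - b ↔ (a : ZMod n) = (b : ZMod n) := by
    intro a b
    rw [← Int.natAbs_dvd, hnc, ← ZMod.intCast_zmod_eq_zero_iff_dvd]
    push_cast
    rw [sub_eq_zero]
  -- the bijection with ZMod n
  set F : ZMod n → Submodule.torsion ℤ (Qk (-(T ^ m)) k) := fun a =>
    ⟨Submodule.Quotient.mk ![(a.val : ℤ), 0], (htor _).mpr ⟨a.val, rfl⟩⟩ with hF
  have hFcoe : ∀ a : ℤ, ((F (a : ZMod n) : Submodule.torsion ℤ (Qk (-(T ^ m)) k)) : Qk (-(T ^ m)) k)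
      = Submodule.Quotient.mk ![a, 0] := by
    intro a
    refine (hmk _ _).mpr ((hdvd_iff _ _).mpr ?_)
    push_cast
    rw [ZMod.natCast_zmod_val]
  have hFinj : Function.Injective F := by
    intro a b hab
    have h := Subtype.ext_iff.mp hab
    have h2 := (hdvd_iff _ _).mp ((hmk _ _).mp h)
    rwa [Int.cast_natCast, Int.cast_natCast, ZMod.natCast_zmod_val, ZMod.natCast_zmod_val] at h2
  have hFsurj : Function.Surjective F := by
    rintro ⟨x, hx⟩
    obtain ⟨a, rfl⟩ := (htor x).mp hx
    exact ⟨(a : ZMod n), Subtype.ext (hFcoe a)⟩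
  have hcard : Nat.card (Submodule.torsion ℤ (Qk (-(T ^ m)) k)) = n := by
    rw [← Nat.card_zmod n]
    exact (Nat.card_eq_of_bijective F ⟨hFinj, hFsurj⟩).symm
  -- negation action
  have hγmat : ((-(T ^ m) : Matrix.SpecialLinearGroup (Fin 2) ℤ) : Matrix (Fin 2) (Fin 2) ℤ)
      = !![-1, -m; 0, -1] := by
    rw [Matrix.SpecialLinearGroup.coe_neg,
      show ((T ^ m : Matrix.SpecialLinearGroup (Fin 2) ℤ) : Matrix (Fin 2) (Fin 2) ℤ)
        = !![1, m; 0, 1] from ModularGroup.coe_T_zpow m]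
    ext i j
    fin_cases i <;> fin_cases j <;> simp
  have hgneg : ∀ a : ℤ, g (Submodule.Quotient.mk ![a, 0]) =
      Submodule.Quotient.mk ![-a, 0] := by
    intro a
    rw [hg]
    congr 1
    funext i
    fin_cases i <;> simp [hγmat, Matrix.mulVec, dotProduct, Fin.sum_univ_two]
  have hneg : ∀ x ∈ Submodule.torsion ℤ (Qk (-(T ^ m)) k), g x = -x := by
    intro x hx
    obtain ⟨a, rfl⟩ := (htor x).mp hx
    rw [hgneg, ← Submodule.Quotient.mk_neg]
    congr 1
    funext i
    fin_cases i <;> simp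
  -- powers of g on torsion
  have hpow : ∀ x : Qk (-(T ^ m)) k, x ∈ Submodule.torsion ℤ (Qk (-(T ^ m)) k) →
      ∀ j : ℕ, (g ^ j) x = x ∨ (g ^ j) x = -x := by
    intro x hx j
    induction j with
    | zero => left; simp
    | succ j ih =>
      have hstep : (g ^ (j + 1)) x = -((g ^ j) x) := by
        rw [pow_succ, Module.End.mul_apply, hneg x hx, map_neg]
      rcases ih with h | h
      · right; rw [hstep, h]
      · left; rw [hstep, h, neg_neg]
  -- F transports negation
  have hFneg : ∀ a : ZMod n, ((F (-a) : Submodule.torsion ℤ (Qk (-(T ^ m)) k)) : Qk (-(T ^ m)) k)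
      = -((F a : Submodule.torsion ℤ (Qk (-(T ^ m)) k)) : Qk (-(T ^ m)) k) := by
    intro a
    have h1 : ((-(a.val : ℤ) : ℤ) : ZMod n) = -a := by
      push_cast
      rw [ZMod.natCast_zmod_val]
    rw [← h1, hFcoe]
    have h2 : ((F a : Submodule.torsion ℤ (Qk (-(T ^ m)) k)) : Qk (-(T ^ m)) k)
        = Submodule.Quotient.mk ![(a.val : ℤ), 0] := rfl
    rw [h2, ← Submodule.Quotient.mk_neg]
    congr 1
    funext i
    fin_cases i <;> simp
  -- the relation transported to ZMod n
  have hr : ∀ a b : ZMod n,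
      (a = b ∨ a = -b) ↔ ∃ j : ℕ, (g ^ j) ((F a : Submodule.torsion ℤ (Qk (-(T ^ m)) k)) : Qk (-(T ^ m)) k)
        = ((F b : Submodule.torsion ℤ (Qk (-(T ^ m)) k)) : Qk (-(T ^ m)) k) := by
    intro a b
    constructor
    · rintro (rfl | rfl)
      · exact ⟨0, by simp⟩
      · refine ⟨1, ?_⟩
        rw [pow_one, hneg _ (F (-b)).2, hFneg, neg_neg]
    · rintro ⟨j, hj⟩
      rcases hpow _ (F a).2 j with h | h
      · left
        exact hFinj (Subtype.ext (by rw [← hj, h]))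
      · right
        have hb : ((F b : Submodule.torsion ℤ (Qk (-(T ^ m)) k)) : Qk (-(T ^ m)) k)
            = ((F (-a) : Submodule.torsion ℤ (Qk (-(T ^ m)) k)) : Qk (-(T ^ m)) k) := by
          rw [← hj, h, hFneg]
        have := hFinj (Subtype.ext hb)
        rw [this]
        rw [neg_neg]
  -- conclude
  have hEven : Even n := hke.mul_left m.natAbs
  have hquot :
      Nat.card (Quot fun x y : Submodule.torsion ℤ (Qk (-(T ^ m)) k) =>
        ∃ j : ℕ, (g ^ j) (x : Qk (-(T ^ m)) k) = (y : Qk (-(T ^ m)) k)) = n / 2 + 1 := by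
    rw [← card_quot_neg n hn2 hEven]
    exact (Nat.card_congr (Quot.congr (Equiv.ofBijective F ⟨hFinj, hFsurj⟩)
      (fun a b => hr a b))).symm
  have hdiv : n / 2 = m.natAbs * (k / 2) := by
    rw [hn]
    exact Nat.mul_div_assoc _ hke.two_dvd
  refine ⟨hcard, hneg, ?_⟩
  rw [hquot, hdiv]
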